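/- For any arrangement of d lines, c̄₁² − 3·c̄₂ = d − Σ_{m≥2} t_m. Consequently, for a nontrivial arrangement, c̄₁² ≤ 3·c̄₂. -/

import Mathlib

open scoped BigOperators

/-- Points and lines of the projective plane over `k` (lines via duality). -/
abbrev ProjPlane (k : Type*) [Field k] := Projectivization k (Fin 3 → k)

/-- Incidence between a point `p` and a line `L` (given by its dual coefficients):
all representatives pair to zero under the standard bilinear form. -/
def Incid {k : Type*} [Field k] (p L : ProjPlane k) : Prop :=
  ∀ v ∈ p.submodule, ∀ w ∈ L.submodule, ∑ i, v i * w i = 0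

/-- Number of lines of the arrangement `A` passing through the point `p`. -/
noncomputable def linesThrough {k : Type*} [Field k]
    (A : Finset (ProjPlane k)) (p : ProjPlane k) : ℕ :=
  {L : ProjPlane k | L ∈ A ∧ Incid p L}.ncard

/-- `tm A m` is the number of `m`-points of the arrangement `A`. -/
noncomputable def tm {k : Type*} [Field k]
    (A : Finset (ProjPlane k)) (m : ℕ) : ℕ :=
  {p : ProjPlane k | linesThrough A p = m}.ncard

/-- The arrangement is trivial if all its lines pass through a common point. -/
def IsTrivial {k : Type*} [Field k] (A : Finset (ProjPlane k)) : Prop :=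
  ∃ p : ProjPlane k, ∀ L ∈ A, Incid p L

/-- First Chern number of a line arrangement. -/
noncomputable def c1sq {k : Type*} [Field k] (A : Finset (ProjPlane k)) : ℤ :=
  9 - 5 * (A.card : ℤ) +
    ∑ m ∈ Finset.Icc 2 A.card, (3 * (m : ℤ) - 4) * (tm A m : ℤ)

/-- Second Chern number of a line arrangement. -/
noncomputable def c2 {k : Type*} [Field k] (A : Finset (ProjPlane k)) : ℤ :=
  3 - 2 * (A.card : ℤ) +
    ∑ m ∈ Finset.Icc 2 A.card, ((m : ℤ) - 1) * (tm A m : ℤ)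

/-! The identity only rearranges the defining sums, as `(3m - 4) - 3(m - 1) = -1`. The inequality
then says that a nontrivial arrangement has at least as many multiple points as lines, which is the
de Bruijn–Erdős theorem: taking the lines of `A` as points and the multiple points as lines gives a
nondegenerate configuration in which two distinct points lie on a unique line (two distinct lines
of `A` meet in exactly one point), so `Configuration.HasLines.card_le` applies. -/

open Finset Projectivization Configuration.ofField

section

variable {k : Type*} [Field k]

theorem incid_iff_orthogonal (p L : ProjPlane k) : Incid p L ↔ p.orthogonal L := by
  induction p using Projectivization.ind with | h v hv => ?_
  induction L using Projectivization.ind with | h w hw => ?_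
  simp only [Incid, orthogonal_mk, submodule_mk, Submodule.mem_span_singleton]
  constructor
  · exact fun h ↦ h v ⟨1, one_smul k v⟩ w ⟨1, one_smul k w⟩
  · rintro h _ ⟨a, rfl⟩ _ ⟨b, rfl⟩
    change (a • v) ⬝ᵥ (b • w) = 0
    simp [h]

theorem incid_cross_left [DecidableEq k] {L M : ProjPlane k} (h : L ≠ M) :
    Incid (cross L M) L :=
  (incid_iff_orthogonal _ _).2 (cross_orthogonal_left h)

theorem incid_cross_right [DecidableEq k] {L M : ProjPlane k} (h : L ≠ M) :
    Incid (cross L M) M :=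
  (incid_iff_orthogonal _ _).2 (cross_orthogonal_right h)

theorem eq_or_eq_of_incid {p q L M : ProjPlane k} (hpL : Incid p L) (hqL : Incid q L)
    (hpM : Incid p M) (hqM : Incid q M) : p = q ∨ L = M := by
  simp only [incid_iff_orthogonal] at hpL hpM hqL hqM
  exact eq_or_eq_of_orthogonal hpL hqL hpM hqM

theorem exists_incid (L : ProjPlane k) : ∃ p, Incid p L := by
  classical
  obtain ⟨-, p, -, -, M, -, -, -, -, hpM, -⟩ :=
    Configuration.ProjectivePlane.exists_config (P := ProjPlane k) (L := ProjPlane k)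
  by_cases h : L = M
  · exact ⟨p, h ▸ (incid_iff_orthogonal _ _).2 hpM⟩
  · exact ⟨cross L M, incid_cross_left h⟩

end

section

variable {k : Type*} [Field k] (A : Finset (ProjPlane k))

theorem c1sq_sub_three_mul_c2 :
    c1sq A - 3 * c2 A = A.card - ∑ m ∈ Icc 2 A.card, (tm A m : ℤ) := by
  have h : ∑ m ∈ Icc 2 A.card, (3 * (m : ℤ) - 4) * tm A m
      = 3 * ∑ m ∈ Icc 2 A.card, ((m : ℤ) - 1) * tm A m - ∑ m ∈ Icc 2 A.card, (tm A m : ℤ) := by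
    rw [mul_sum, ← sum_sub_distrib]
    exact sum_congr rfl fun m _ ↦ by ring
  rw [c1sq, c2, h]
  ring

theorem linesThrough_le_card (p : ProjPlane k) : linesThrough A p ≤ A.card :=
  (Set.ncard_le_ncard (fun L (h : L ∈ A ∧ Incid p L) ↦ h.1) A.finite_toSet).trans_eq
    (Set.ncard_coe_finset A)

theorem two_le_linesThrough_iff {p : ProjPlane k} :
    2 ≤ linesThrough A p ↔ ∃ L ∈ A, ∃ M ∈ A, L ≠ M ∧ Incid p L ∧ Incid p M := by
  change 1 < Set.ncard _ ↔ _
  rw [Set.one_lt_ncard_iff (A.finite_toSet.subset fun _ h ↦ h.1)]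
  constructor
  · rintro ⟨L, M, ⟨hL, hpL⟩, ⟨hM, hpM⟩, hLM⟩
    exact ⟨L, hL, M, hM, hLM, hpL, hpM⟩
  · rintro ⟨L, hL, M, hM, hLM, hpL, hpM⟩
    exact ⟨L, M, ⟨hL, hpL⟩, ⟨hM, hpM⟩, hLM⟩

def multiplePoints : Set (ProjPlane k) := {p | 2 ≤ linesThrough A p}

theorem multiplePoints_finite : (multiplePoints A).Finite := by
  classical
  refine (A.finite_toSet.image2 cross A.finite_toSet).subset fun p hp ↦ ?_
  obtain ⟨L, hL, M, hM, hLM, hpL, hpM⟩ := (two_le_linesThrough_iff A).1 hp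
  refine ⟨L, hL, M, hM, ?_⟩
  exact (eq_or_eq_of_incid (incid_cross_left hLM) hpL (incid_cross_right hLM) hpM).resolve_right hLM

theorem ncard_multiplePoints :
    (multiplePoints A).ncard = ∑ m ∈ Icc 2 A.card, tm A m := by
  classical
  rw [Set.ncard_eq_toFinset_card _ (multiplePoints_finite A),
    card_eq_sum_card_fiberwise (f := linesThrough A) fun p hp ↦ ?_]
  · refine sum_congr rfl fun m hm ↦ ?_
    rw [tm, ← Set.ncard_coe_finset]
    congr
    ext p
    simpa [multiplePoints] using fun h ↦ h ▸ (mem_Icc.1 hm).1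
  · rw [mem_coe, Set.Finite.mem_toFinset] at hp
    exact mem_Icc.2 ⟨hp, linesThrough_le_card A p⟩

instance : Membership A (multiplePoints A) := ⟨fun p L ↦ Incid p.1 L.1⟩

variable {A}

theorem exists_not_incid_of_not_isTrivial (hA : ¬IsTrivial A) (p : ProjPlane k) :
    ∃ L ∈ A, ¬Incid p L := by
  simp only [IsTrivial, not_exists, not_forall, exists_prop] at hA
  exact hA p

theorem exists_mem_multiplePoints_not_incid (hA : ¬IsTrivial A) (L : ProjPlane k) :
    ∃ p ∈ multiplePoints A, ¬Incid p L := by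
  classical
  obtain ⟨q₀, hq₀L⟩ := exists_incid L
  obtain ⟨M, hM, hq₀M⟩ := exists_not_incid_of_not_isTrivial hA q₀
  have hLM : L ≠ M := by rintro rfl; exact hq₀M hq₀L
  obtain ⟨N, hN, hqN⟩ := exists_not_incid_of_not_isTrivial hA (cross L M)
  have hMN : M ≠ N := by rintro rfl; exact hqN (incid_cross_right hLM)
  refine ⟨cross M N, (two_le_linesThrough_iff A).2
    ⟨M, hM, N, hN, hMN, incid_cross_left hMN, incid_cross_right hMN⟩, fun hL' ↦ hqN ?_⟩
  -- If `M ∩ N` lay on `L`, it would be `L ∩ M`, which is not on `N`.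
  obtain h | h := eq_or_eq_of_incid hL' (incid_cross_left hLM) (incid_cross_left hMN)
    (incid_cross_right hLM)
  · exact h ▸ incid_cross_right hMN
  · exact absurd h hLM

open Classical in
noncomputable abbrev hasLinesOfNotIsTrivial (hA : ¬IsTrivial A) :
    Configuration.HasLines A (multiplePoints A) where
  exists_point p :=
    let ⟨L, hL, hpL⟩ := exists_not_incid_of_not_isTrivial hA p.1
    ⟨⟨L, hL⟩, hpL⟩
  exists_line L :=
    let ⟨p, hp, hpL⟩ := exists_mem_multiplePoints_not_incid hA L.1
    ⟨⟨p, hp⟩, hpL⟩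
  eq_or_eq h₁₁ h₂₁ h₁₂ h₂₂ :=
    (eq_or_eq_of_incid h₁₁ h₁₂ h₂₁ h₂₂).symm.imp Subtype.ext Subtype.ext
  mkLine {L M} h :=
    ⟨cross L.1 M.1, (two_le_linesThrough_iff A).2 ⟨L, L.2, M, M.2, Subtype.coe_ne_coe.2 h,
      incid_cross_left (Subtype.coe_ne_coe.2 h), incid_cross_right (Subtype.coe_ne_coe.2 h)⟩⟩
  mkLine_ax h :=
    ⟨incid_cross_left (Subtype.coe_ne_coe.2 h), incid_cross_right (Subtype.coe_ne_coe.2 h)⟩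

theorem card_le_ncard_multiplePoints (hA : ¬IsTrivial A) :
    A.card ≤ (multiplePoints A).ncard := by
  let := hasLinesOfNotIsTrivial hA
  let := (multiplePoints_finite A).fintype
  have h := Configuration.HasLines.card_le A (multiplePoints A)
  rwa [Fintype.card_coe, ← Nat.card_eq_fintype_card, Nat.card_coe_set_eq] at h

theorem card_le_sum_tm_of_not_isTrivial (hA : ¬IsTrivial A) :
    A.card ≤ ∑ m ∈ Icc 2 A.card, tm A m :=
  ncard_multiplePoints A ▸ card_le_ncard_multiplePoints hA

end

theorem stmt_11_general {k : Type*} [Field k] (A : Finset (ProjPlane k)) :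
    c1sq A - 3 * c2 A =
      (A.card : ℤ) - ∑ m ∈ Finset.Icc 2 A.card, (tm A m : ℤ) ∧
    (¬ IsTrivial A → c1sq A ≤ 3 * c2 A) := by
  refine ⟨c1sq_sub_three_mul_c2 A, fun hA ↦ ?_⟩
  have := card_le_sum_tm_of_not_isTrivial hA
  rw [← sub_nonpos, c1sq_sub_three_mul_c2, sub_nonpos]
  exact_mod_cast this

/-- For any arrangement of `d` lines, `c̄₁² - 3 c̄₂ = d - Σ_{m≥2} t_m`;
consequently, for a nontrivial arrangement, `c̄₁² ≤ 3 c̄₂`. -/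
theorem stmt_11 {k : Type*} [Field k] (A : Finset (ProjPlane k))
    (hd : 2 ≤ A.card) :
    c1sq A - 3 * c2 A =
      (A.card : ℤ) - ∑ m ∈ Finset.Icc 2 A.card, (tm A m : ℤ) ∧
    (¬ IsTrivial A → c1sq A ≤ 3 * c2 A) :=
  stmt_11_general A
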